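/- Let n ∈ ℕ and let Δ : MvPolynomial (Fin n) ℝ → MvPolynomial (Fin n) ℝ be the polynomial Laplacian Δp = ∑_{i} ∂ᵢ(∂ᵢ p). Let y₁, …, y_{2d} ∈ ℝⁿ and let p = ∏_{i=1}^{2d} (⟨yᵢ⟩) where ⟨yᵢ⟩ denotes the linear polynomial ∑_j (yᵢ)_j X_j. Then Δ^d p is the constant polynomial ∑_{σ} ∏_{k=1}^{d} ⟨y_{σ(2k−1)}, y_{σ(2k)}⟩, where the sum runs over all permutations σ of {1,…,2d} and ⟨·,·⟩ is the standard inner product on ℝⁿ. -/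

import Mathlib

/-!
Applying `∑ᵢ ∂ᵢ∂ᵢ` to a product of linear forms `ℓ_k = ⟨y_k, X⟩` differentiates two distinct
factors `ℓ_a, ℓ_b` and replaces them by the constant `⟨y_a, y_b⟩`, summed over ordered pairs
`(a, b)`. After `d` steps the `2d` factors are used up, and the choices made along the way are
the sequences `a₁, b₁, …, a_d, b_d` of distinct indices, i.e. the permutations of `Fin (2d)`.
-/

open MvPolynomial Finset

theorem Derivation.leibniz_prod {R A M ι : Type*} [CommSemiring R] [CommSemiring A]
    [Algebra R A] [AddCommMonoid M] [Module A M] [Module R M] [DecidableEq ι]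
    (D : Derivation R A M) (s : Finset ι) (f : ι → A) :
    D (∏ k ∈ s, f k) = ∑ k ∈ s, (∏ l ∈ s.erase k, f l) • D (f k) := by
  induction s using Finset.induction_on with
  | empty => simp
  | insert a s ha ih =>
    rw [prod_insert ha, D.leibniz, ih, sum_insert ha, erase_insert ha, smul_sum, add_comm]
    congr 1
    refine sum_congr rfl fun k hk => ?_
    rw [erase_insert_of_ne (ne_of_mem_of_not_mem hk ha).symm,
      prod_insert (fun h => ha (mem_of_mem_erase h)), mul_smul]

theorem Fin.two_mul_val_lt {e : ℕ} (k : Fin e) : 2 * (k : ℕ) < 2 * e := by omega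

theorem Fin.two_mul_val_add_one_lt {e : ℕ} (k : Fin e) : 2 * (k : ℕ) + 1 < 2 * e := by omega

section Pairings

variable {α : Type*}

def injectiveMapsInto [DecidableEq α] (n : ℕ) (s : Finset α) : Finset (Fin n → α) :=
  {f ∈ Fintype.piFinset fun _ => s | Function.Injective f}

theorem cons_mem_injectiveMapsInto_iff [DecidableEq α] {n : ℕ} {s : Finset α} {i : α}
    {g : Fin n → α} :
    Fin.cons i g ∈ injectiveMapsInto (n + 1) s ↔ i ∈ s ∧ g ∈ injectiveMapsInto n (s.erase i) := by
  simp only [injectiveMapsInto, mem_filter, Fintype.mem_piFinset, Fin.forall_fin_succ,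
    Fin.cons_zero, Fin.cons_succ, Fin.cons_injective_iff, Set.mem_range, not_exists, mem_erase,
    ne_eq, forall_and]
  tauto

theorem sum_injectiveMapsInto_succ [DecidableEq α] {M : Type*} [AddCommMonoid M] (n : ℕ)
    (s : Finset α) (F : (Fin (n + 1) → α) → M) :
    ∑ f ∈ injectiveMapsInto (n + 1) s, F f =
      ∑ i ∈ s, ∑ g ∈ injectiveMapsInto n (s.erase i), F (Fin.cons i g) := by
  rw [sum_sigma']
  refine sum_nbij' (fun f => ⟨f 0, Fin.tail f⟩) (fun x => Fin.cons x.1 x.2) (fun f hf => ?_)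
    (fun x hx => ?_) (fun f _ => Fin.cons_self_tail f) (fun _ _ => by simp) (fun f _ => ?_)
  · rw [← Fin.cons_self_tail f, cons_mem_injectiveMapsInto_iff] at hf
    simpa using hf
  · simpa [cons_mem_injectiveMapsInto_iff] using hx
  · rw [Fin.cons_self_tail]

theorem sum_injectiveMapsInto_univ {M : Type*} [AddCommMonoid M] (n : ℕ)
    (F : (Fin n → Fin n) → M) :
    ∑ f ∈ injectiveMapsInto n univ, F f = ∑ τ : Equiv.Perm (Fin n), F τ := by
  refine (sum_bij (fun (τ : Equiv.Perm (Fin n)) _ => ⇑τ) (fun τ _ => ?_)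
    (fun _ _ _ _ h => DFunLike.coe_injective h) (fun f hf => ?_) (fun _ _ => rfl)).symm
  · simp [injectiveMapsInto, τ.injective]
  · have hf : Function.Injective f := by simpa [injectiveMapsInto] using hf
    exact ⟨Equiv.ofBijective f hf.bijective_of_finite, mem_univ _, rfl⟩

def pairingProduct {R : Type*} [CommMonoid R] (w : α → α → R) {e : ℕ} (f : Fin (2 * e) → α) : R :=
  ∏ k : Fin e, w (f ⟨2 * k, Fin.two_mul_val_lt k⟩) (f ⟨2 * k + 1, Fin.two_mul_val_add_one_lt k⟩)

theorem pairingProduct_cons_cons {R : Type*} [CommMonoid R] (w : α → α → R) {e : ℕ} (i j : α)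
    (g : Fin (2 * e) → α) :
    pairingProduct (e := e + 1) w (Fin.cons i (Fin.cons j g)) = w i j * pairingProduct w g := by
  rw [pairingProduct, Fin.prod_univ_succ]
  rfl

theorem sum_pairingProduct_succ [DecidableEq α] {R : Type*} [CommSemiring R] (w : α → α → R)
    (e : ℕ) (s : Finset α) :
    ∑ f ∈ injectiveMapsInto (2 * (e + 1)) s, pairingProduct w f =
      ∑ i ∈ s, ∑ j ∈ s.erase i, w i j *
        ∑ g ∈ injectiveMapsInto (2 * e) ((s.erase i).erase j), pairingProduct w g := by
  change ∑ f ∈ injectiveMapsInto (2 * e + 1 + 1) s, pairingProduct (e := e + 1) w f = _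
  simp only [sum_injectiveMapsInto_succ, pairingProduct_cons_cons, mul_sum]

end Pairings

namespace MvPolynomial

variable {σ R ι : Type*} [CommSemiring R] [Fintype σ]

noncomputable def linearForm (v : σ → R) : MvPolynomial σ R := ∑ j, C (v j) * X j

noncomputable def laplacian : Module.End R (MvPolynomial σ R) :=
  ∑ i, (pderiv i).toLinearMap ∘ₗ (pderiv i).toLinearMap

theorem laplacian_apply (q : MvPolynomial σ R) :
    laplacian q = ∑ i, pderiv i (pderiv i q) := by
  simp [laplacian]

theorem pderiv_linearForm (i : σ) (v : σ → R) : pderiv i (linearForm v) = C (v i) := by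
  classical
  simp [linearForm, pderiv_X, Pi.single_apply]

theorem pderiv_prod_linearForm [DecidableEq ι] (i : σ) (y : ι → σ → R) (s : Finset ι) :
    pderiv i (∏ k ∈ s, linearForm (y k)) = ∑ k ∈ s, y k i • ∏ l ∈ s.erase k, linearForm (y l) := by
  simp only [Derivation.leibniz_prod, pderiv_linearForm, smul_eq_mul, mul_comm, C_mul']

theorem laplacian_prod_linearForm [DecidableEq ι] (y : ι → σ → R) (s : Finset ι) :
    laplacian (∏ k ∈ s, linearForm (y k)) =
      ∑ i ∈ s, ∑ j ∈ s.erase i, (y i ⬝ᵥ y j) • ∏ l ∈ (s.erase i).erase j, linearForm (y l) := by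
  simp only [laplacian_apply, pderiv_prod_linearForm, map_sum, Derivation.map_smul, smul_sum]
  rw [sum_comm]
  refine sum_congr rfl fun i _ => ?_
  rw [sum_comm]
  refine sum_congr rfl fun j _ => ?_
  simp only [dotProduct, sum_smul, smul_smul]

theorem laplacian_pow_prod_linearForm [DecidableEq ι] (y : ι → σ → R) (e : ℕ) (s : Finset ι)
    (hs : #s = 2 * e) :
    (laplacian ^ e) (∏ k ∈ s, linearForm (y k)) =
      C (∑ f ∈ injectiveMapsInto (2 * e) s, pairingProduct (fun i j => y i ⬝ᵥ y j) f) := by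
  induction e generalizing s with
  | zero =>
    rw [mul_zero, card_eq_zero] at hs
    subst hs
    simp [pairingProduct, injectiveMapsInto, Function.injective_of_subsingleton]
  | succ e ih =>
    rw [pow_succ, Module.End.mul_apply, laplacian_prod_linearForm, sum_pairingProduct_succ,
      map_sum, map_sum]
    refine sum_congr rfl fun i hi => ?_
    rw [map_sum, map_sum]
    refine sum_congr rfl fun j hj => ?_
    have hcard : #((s.erase i).erase j) = 2 * e := by
      rw [card_erase_of_mem hj, card_erase_of_mem hi, hs]
      omega
    rw [map_smul, ih _ hcard, map_mul, C_mul']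

end MvPolynomial

/-- Wick pairing formula: the `d`-th power of the polynomial Laplacian applied to a
product of `2d` linear forms is the constant given by the sum over all permutations
`σ` of `{1,…,2d}` of the products of the inner products of consecutively paired forms. -/
theorem laplacian_pow_product_linear_forms
    (n d : ℕ) (Δ : MvPolynomial (Fin n) ℝ → MvPolynomial (Fin n) ℝ)
    (hΔ : ∀ q : MvPolynomial (Fin n) ℝ, Δ q = ∑ i : Fin n, pderiv i (pderiv i q))
    (y : Fin (2 * d) → (Fin n → ℝ)) :
    Δ^[d] (∏ i : Fin (2 * d), (∑ j : Fin n, C (y i j) * X j))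
      = C (∑ σ : Equiv.Perm (Fin (2 * d)), ∏ k : Fin d,
          ∑ j : Fin n, y (σ ⟨2 * (k : ℕ), by omega⟩) j * y (σ ⟨2 * (k : ℕ) + 1, by omega⟩) j) := by
  obtain rfl : Δ = ⇑(laplacian : Module.End ℝ (MvPolynomial (Fin n) ℝ)) := by
    funext q
    rw [hΔ, laplacian_apply]
  rw [← Module.End.coe_pow]
  calc (laplacian ^ d) (∏ i, linearForm (y i))
      = C (∑ f ∈ injectiveMapsInto (2 * d) univ, pairingProduct (fun a b => y a ⬝ᵥ y b) f) :=
        laplacian_pow_prod_linearForm y d univ (card_fin _)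
    _ = _ := by rw [sum_injectiveMapsInto_univ]; rfl
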